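/- arXiv:1207.0115 — 3 statements merged into one kernel-verified Lean document; each statement's English description precedes it below -/
import Mathlib

section
/- Two bilinear symmetric nondegenerate forms g₁, g₂ of Lorentzian signature on a real 4-dimensional vector space have the same set of null vectors if and only if g₂ = λ·g₁ for some nonzero real λ. -/
open LinearMap (BilinForm)

/-- A symmetric bilinear form on a real vector space is Lorentzian (signature `(1,3)`,
possibly up to overall sign) if, up to a sign `ε = ±1`, it admits a basis `e₀,e₁,e₂,e₃`
with `ε·g(e₀,e₀) = 1`, `ε·g(eᵢ,eᵢ) = −1` for `i = 1,2,3`, and `g(eᵢ,eⱼ) = 0` for `i ≠ j`. -/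
def IsLorentzian {V : Type*} [AddCommGroup V] [Module ℝ V]
    (g : LinearMap.BilinForm ℝ V) : Prop :=
  ∃ (ε : ℝ) (e : Module.Basis (Fin 4) ℝ V), (ε = 1 ∨ ε = -1) ∧
    ∀ i j, ε * g (e i) (e j) = if i = j then (if i = 0 then 1 else -1) else 0

/-!
If `η` is a Minkowski form, the null vectors `eₜ ± eᵢ` force a symmetric form `g` vanishing on
the null cone of `η` to satisfy `g(eₜ, eᵢ) = 0` and `g(eᵢ, eᵢ) = -g(eₜ, eₜ)`, and the null vectors
`√2 eₜ + eᵢ + eⱼ` then force `g(eᵢ, eⱼ) = 0`; so `g = g(eₜ, eₜ) • η`. The scalar is nonzero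
because `eₜ` is not `η`-null.
-/

namespace LinearMap.BilinForm

variable {V ι : Type*} [AddCommGroup V] [Module ℝ V] [DecidableEq ι]

def minkowski (t i j : ι) : ℝ :=
  if i = j then (if i = t then 1 else -1) else 0

theorem setOf_smul_apply_self_eq_zero (g : BilinForm ℝ V) {l : ℝ} (hl : l ≠ 0) :
    {v : V | (l • g) v v = 0} = {v : V | g v v = 0} := by
  ext v
  simp [hl]

section NullCone

variable (e : Module.Basis ι ℝ V) (t : ι) {η g : BilinForm ℝ V}
  (hη : ∀ i j, η (e i) (e j) = minkowski t i j) (hg : ∀ x y, g x y = g y x)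
  (hnull : ∀ v, η v v = 0 → g v v = 0)
include hη hg hnull

theorem apply_timelike_spacelike_of_null {i : ι} (hi : i ≠ t) :
    g (e t) (e i) = 0 ∧ g (e i) (e i) = -g (e t) (e t) := by
  have hη' : ∀ c : ℝ, η (e t + c • e i) (e t + c • e i) = 1 - c * c := by
    intro c
    simp [hη, minkowski, hi, Ne.symm hi]
    ring
  have hg' : ∀ c : ℝ, g (e t + c • e i) (e t + c • e i)
      = g (e t) (e t) + 2 * c * g (e t) (e i) + c * c * g (e i) (e i) := by
    intro c
    simp only [map_add, map_smul, LinearMap.add_apply, LinearMap.smul_apply, smul_eq_mul,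
      hg (e i) (e t)]
    ring
  have hplus := hnull _ ((hη' 1).trans (by norm_num))
  have hminus := hnull _ ((hη' (-1)).trans (by norm_num))
  rw [hg'] at hplus hminus
  constructor <;> linarith

theorem apply_spacelike_of_null {i j : ι} (hi : i ≠ t) (hj : j ≠ t) (hij : i ≠ j) :
    g (e i) (e j) = 0 := by
  set v := √2 • e t + e i + e j
  have hs : √2 * √2 = 2 := Real.mul_self_sqrt zero_le_two
  have hηv : η v v = 0 := by
    simp [v, hη, minkowski, hi, hj, hij, Ne.symm hi, Ne.symm hj, Ne.symm hij]
    linarith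
  have hgv := hnull v hηv
  obtain ⟨hti, hii⟩ := apply_timelike_spacelike_of_null e t hη hg hnull hi
  obtain ⟨htj, hjj⟩ := apply_timelike_spacelike_of_null e t hη hg hnull hj
  simp only [v, map_add, map_smul, LinearMap.add_apply, LinearMap.smul_apply, smul_eq_mul,
    hg (e i) (e t), hg (e j) (e t), hg (e j) (e i), hti, htj, hii, hjj] at hgv
  linear_combination hgv / 2 - g (e t) (e t) / 2 * hs

theorem eq_smul_of_null_imp_null : g = g (e t) (e t) • η := by
  refine ext_basis e fun i j => ?_
  rw [LinearMap.smul_apply, LinearMap.smul_apply, smul_eq_mul, hη]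
  by_cases hi : i = t <;> by_cases hj : j = t
  · simp [hi, hj, minkowski]
  · rw [hi]
    simp [minkowski, Ne.symm hj, (apply_timelike_spacelike_of_null e t hη hg hnull hj).1]
  · rw [hj]
    simp [minkowski, hi, hg (e i), (apply_timelike_spacelike_of_null e t hη hg hnull hi).1]
  · by_cases hij : i = j
    · subst hij
      simp [minkowski, hi, (apply_timelike_spacelike_of_null e t hη hg hnull hi).2]
    · simp [minkowski, hij, apply_spacelike_of_null e t hη hg hnull hi hj hij]

end NullCone

end LinearMap.BilinForm

open LinearMap.BilinForm in
theorem stmt_2_general (V : Type*) [AddCommGroup V] [Module ℝ V]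
    (g₁ g₂ : LinearMap.BilinForm ℝ V)
    (hsymm₂ : ∀ x y, g₂ x y = g₂ y x)
    (hL₁ : IsLorentzian g₁) :
    ({v : V | g₁ v v = 0} = {v : V | g₂ v v = 0}) ↔ ∃ l : ℝ, l ≠ 0 ∧ g₂ = l • g₁ := by
  refine ⟨fun hcone => ?_, fun ⟨l, hl, hg₂⟩ => hg₂ ▸ (setOf_smul_apply_self_eq_zero g₁ hl).symm⟩
  obtain ⟨ε, e, hε, he⟩ := hL₁
  have hε0 : ε ≠ 0 := by rcases hε with rfl | rfl <;> norm_num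
  have hη : ∀ i j, (ε • g₁) (e i) (e j) = minkowski 0 i j := he
  have hnull : ∀ v, (ε • g₁) v v = 0 → g₂ v v = 0 := fun v hv => by
    have : v ∈ {v : V | (ε • g₁) v v = 0} := hv
    rwa [setOf_smul_apply_self_eq_zero g₁ hε0, hcone] at this
  have hg₂ := eq_smul_of_null_imp_null e 0 hη hsymm₂ hnull
  set a := g₂ (e 0) (e 0)
  have ha : a ≠ 0 := by
    intro ha
    have h₁ : g₁ (e 0) (e 0) = 0 := by
      have : e 0 ∈ {v : V | g₂ v v = 0} := by simp [hg₂, ha]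
      rwa [← hcone] at this
    simpa [minkowski, h₁] using hη 0 0
  exact ⟨a * ε, mul_ne_zero ha hε0, by rw [hg₂, smul_smul]⟩

/-- Two symmetric nondegenerate bilinear forms of Lorentzian signature on a
real 4-dimensional vector space have the same set of null vectors if and only if
`g₂ = λ • g₁` for some nonzero real `λ`. -/
theorem stmt_2 (V : Type*) [AddCommGroup V] [Module ℝ V] [FiniteDimensional ℝ V]
    (hdim : Module.finrank ℝ V = 4)
    (g₁ g₂ : LinearMap.BilinForm ℝ V)
    (hsymm₁ : ∀ x y, g₁ x y = g₁ y x) (hsymm₂ : ∀ x y, g₂ x y = g₂ y x)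
    (hnd₁ : g₁.Nondegenerate) (hnd₂ : g₂.Nondegenerate)
    (hL₁ : IsLorentzian g₁) (hL₂ : IsLorentzian g₂) :
    ({v : V | g₁ v v = 0} = {v : V | g₂ v v = 0}) ↔ ∃ l : ℝ, l ≠ 0 ∧ g₂ = l • g₁ :=
  stmt_2_general V g₁ g₂ hsymm₂ hL₁
end

section
/- Let F(a) = a³ + βa² − α²a − α²β − 2L²/π² with real parameters 0 < α ≤ β and L ≠ 0. Then F has exactly one real root A satisfying A > −α, and this root is positive. -/
open Real Set

/-!
Writing `c = 2L²/π² ≥ 0`, the cubic is `F a = (a - α)(a + α)(a + β) - c`. On `(-α, α)` the product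
has one negative and two positive factors, so `F < 0` there; on `[α, ∞)` all three factors are
nonnegative and increasing, so `F` is strictly increasing, starts at `F α = -c ≤ 0` and is
unbounded. Hence there is exactly one root beyond `-α`, and it lies in `[α, ∞)`.
-/

section Cubic

variable {α β c : ℝ}

theorem cubic_neg_of_mem_Ioo (hαβ : α ≤ β) {a : ℝ} (ha : a ∈ Ioo (-α) α) :
    (a - α) * (a + α) * (a + β) < 0 :=
  mul_neg_of_neg_of_pos (mul_neg_of_neg_of_pos (by linarith [ha.2]) (by linarith [ha.1]))
    (by linarith [ha.1])

theorem strictMonoOn_cubic (hα : 0 ≤ α) (hαβ : α ≤ β) :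
    StrictMonoOn (fun a => (a - α) * (a + α) * (a + β)) (Ici α) := by
  intro x (hx : α ≤ x) y (_ : α ≤ y) hxy
  simp only [mul_assoc]
  exact mul_lt_mul'' (by linarith) (mul_lt_mul'' (by linarith) (by linarith) (by linarith)
    (by linarith)) (by linarith) (mul_nonneg (by linarith) (by linarith))

theorem exists_cubic_eq (hα : 0 ≤ α) (hαβ : α ≤ β) (hc : 0 ≤ c) :
    ∃ A, α ≤ A ∧ (A - α) * (A + α) * (A + β) = c := by
  set M := α + 1 + c
  have hαM : α ≤ M := by linarith
  have hcM : c ≤ (M - α) * (M + α) * (M + β) := by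
    have hM : (1 : ℝ) ≤ (M + α) * (M + β) := one_le_mul_of_one_le_of_one_le (by linarith)
      (by linarith)
    nlinarith
  have hcont : ContinuousOn (fun a => (a - α) * (a + α) * (a + β)) (Icc α M) := by
    fun_prop
  obtain ⟨A, hA, hAc⟩ := intermediate_value_Icc hαM hcont ⟨by simpa using hc, hcM⟩
  exact ⟨A, hA.1, hAc⟩

theorem le_of_cubic_eq (hαβ : α ≤ β) (hc : 0 ≤ c) {A : ℝ}
    (hA : (A - α) * (A + α) * (A + β) = c) (hαA : -α < A) : α ≤ A := by
  by_contra! hAα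
  linarith [cubic_neg_of_mem_Ioo hαβ ⟨hαA, hAα⟩]

theorem existsUnique_cubic_eq (hα : 0 < α) (hαβ : α ≤ β) (hc : 0 ≤ c) :
    ∃! A, (A - α) * (A + α) * (A + β) = c ∧ -α < A := by
  obtain ⟨A, hαA, hA⟩ := exists_cubic_eq hα.le hαβ hc
  refine ⟨A, ⟨hA, by linarith⟩, fun B ⟨hB, hαB⟩ => ?_⟩
  exact (strictMonoOn_cubic hα.le hαβ).injOn (le_of_cubic_eq hαβ hc hB hαB) hαA (hB.trans hA.symm)

end Cubic

theorem stmt_11_general (α β L : ℝ) (hα : 0 < α) (hαβ : α ≤ β) :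
    let F : ℝ → ℝ := fun a => a ^ 3 + β * a ^ 2 - α ^ 2 * a - α ^ 2 * β
      - 2 * L ^ 2 / π ^ 2
    (∃! A : ℝ, F A = 0 ∧ -α < A) ∧ ∀ A : ℝ, F A = 0 → -α < A → 0 < A := by
  intro F
  have hc : 0 ≤ 2 * L ^ 2 / π ^ 2 := by positivity
  have hF : ∀ a, F a = (a - α) * (a + α) * (a + β) - 2 * L ^ 2 / π ^ 2 := fun a => by
    simp only [F]
    ring
  simp_rw [hF, sub_eq_zero]
  exact ⟨existsUnique_cubic_eq hα hαβ hc,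
    fun A hA hαA => hα.trans_le (le_of_cubic_eq hαβ hc hA hαA)⟩

/-- For `F(a) = a³ + βa² − α²a − α²β − 2L²/π²` with `0 < α ≤ β` and
`L ≠ 0`, `F` has exactly one real root `A` with `A > −α`, and this root is positive. -/
theorem stmt_11 (α β L : ℝ) (hα : 0 < α) (hαβ : α ≤ β) (hL : L ≠ 0) :
    let F : ℝ → ℝ := fun a => a ^ 3 + β * a ^ 2 - α ^ 2 * a - α ^ 2 * β
      - 2 * L ^ 2 / π ^ 2
    (∃! A : ℝ, F A = 0 ∧ -α < A) ∧ ∀ A : ℝ, F A = 0 → -α < A → 0 < A :=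
  stmt_11_general α β L hα hαβ
end

section
/- Let α > 0 and L̃₁, L̃₂ be real with (L̃₁, L̃₂) ≠ (0,0), set L̃² = L̃₁² + L̃₂², and define F(x) = x⁶ − 4α²x⁴ − L̃²x³ + (L̃₁² − L̃₂²)²/4. Then F has exactly two positive real roots if L̃₁² ≠ L̃₂², and exactly one positive real root if L̃₁² = L̃₂². -/
/-!
Write `F = sextic a s c` with `a = α²`, `s = L₁² + L₂²`, `c = (L₁² - L₂²)² / 4 = s² / 4 - L₁² L₂²`.
Then `F' x = x² (6x³ - 16ax - 3s)`, and `r · (6x³ - 16ax - 3s) = (x - r)(6xr(x + r) + 3s)` at the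
positive root `r` of the cubic, so `F` decreases on `[0, r]` and increases on `[r, ∞)`.
Eliminating with the cubic gives `36 F(r) = -128a²r² - 72asr - 36L₁²L₂² < 0`, and `F → ∞`.
Hence `F` has exactly one zero beyond `r`, and one more in `(0, r)` iff `F 0 = c > 0`.
-/

open Set Filter Polynomial

section Valley

variable {f : ℝ → ℝ} {l r : ℝ}

theorem exists_zero_Ioi_of_tendsto_atTop (hf : ContinuousOn f (Ici r)) (hr : f r < 0)
    (htop : Tendsto f atTop atTop) : ∃ b, r < b ∧ f b = 0 := by
  obtain ⟨X, hX, hrX⟩ := ((htop.eventually_gt_atTop 0).and (eventually_ge_atTop r)).exists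
  obtain ⟨b, hb, hfb⟩ := intermediate_value_Ioo hrX (hf.mono Icc_subset_Ici_self) ⟨hr, hX⟩
  exact ⟨b, hb.1, hfb⟩

theorem existsUnique_zero_of_strictMonoOn_Ici (hf : ContinuousOn f (Ici r))
    (hmono : StrictMonoOn f (Ici r)) (hr : f r < 0) (htop : Tendsto f atTop atTop) :
    ∃! b, r ≤ b ∧ f b = 0 := by
  obtain ⟨b, hrb, hb⟩ := exists_zero_Ioi_of_tendsto_atTop hf hr htop
  exact ⟨b, ⟨hrb.le, hb⟩, fun x ⟨hrx, hx⟩ => hmono.injOn hrx hrb.le (hx.trans hb.symm)⟩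

theorem existsUnique_zero_of_strictAntiOn_Icc (hlr : l ≤ r) (hf : ContinuousOn f (Icc l r))
    (hanti : StrictAntiOn f (Icc l r)) (hl : 0 < f l) (hr : f r < 0) :
    ∃! a, a ∈ Icc l r ∧ f a = 0 := by
  obtain ⟨a, ha, hfa⟩ := intermediate_value_Icc' hlr hf ⟨hr.le, hl.le⟩
  exact ⟨a, ⟨ha, hfa⟩, fun x ⟨hx, hfx⟩ => hanti.injOn hx ha (hfx.trans hfa.symm)⟩

theorem ncard_setOf_pos_zero_eq_two (hr0 : 0 ≤ r) (hf : ContinuousOn f (Ici 0))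
    (hanti : StrictAntiOn f (Icc 0 r)) (hmono : StrictMonoOn f (Ici r)) (hr : f r < 0)
    (htop : Tendsto f atTop atTop) (h0 : 0 < f 0) : {x | 0 < x ∧ f x = 0}.ncard = 2 := by
  obtain ⟨a, ⟨ha, hfa⟩, ha_uniq⟩ :=
    existsUnique_zero_of_strictAntiOn_Icc hr0 (hf.mono Icc_subset_Ici_self) hanti h0 hr
  obtain ⟨b, ⟨hb, hfb⟩, hb_uniq⟩ :=
    existsUnique_zero_of_strictMonoOn_Ici (hf.mono (Ici_subset_Ici.mpr hr0)) hmono hr htop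
  have ha0 : 0 < a := ha.1.lt_of_ne (by rintro rfl; linarith)
  have hab : a < b := ha.2.trans_lt (hb.lt_of_ne (by rintro rfl; linarith))
  have hzeros : {x | 0 < x ∧ f x = 0} = {a, b} := by
    ext x
    simp only [mem_ofPred_eq, mem_insert_iff, mem_singleton_iff]
    constructor
    · rintro ⟨hx, hfx⟩
      rcases le_total x r with hxr | hrx
      · exact Or.inl (ha_uniq x ⟨⟨hx.le, hxr⟩, hfx⟩)
      · exact Or.inr (hb_uniq x ⟨hrx, hfx⟩)
    · rintro (rfl | rfl)
      exacts [⟨ha0, hfa⟩, ⟨ha0.trans hab, hfb⟩]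
  rw [hzeros, ncard_pair hab.ne]

theorem existsUnique_pos_zero (hr0 : 0 ≤ r) (hf : ContinuousOn f (Ici 0))
    (hanti : StrictAntiOn f (Icc 0 r)) (hmono : StrictMonoOn f (Ici r)) (hr : f r < 0)
    (htop : Tendsto f atTop atTop) (h0 : f 0 = 0) : ∃! x, 0 < x ∧ f x = 0 := by
  obtain ⟨b, ⟨hb, hfb⟩, hb_uniq⟩ :=
    existsUnique_zero_of_strictMonoOn_Ici (hf.mono (Ici_subset_Ici.mpr hr0)) hmono hr htop
  have hb0 : 0 < b := hr0.trans_lt (hb.lt_of_ne (by rintro rfl; linarith))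
  refine ⟨b, ⟨hb0, hfb⟩, fun x ⟨hx, hfx⟩ => ?_⟩
  rcases le_total x r with hxr | hrx
  · have := hanti ⟨le_rfl, hr0⟩ ⟨hx.le, hxr⟩ hx
    linarith
  · exact hb_uniq x ⟨hrx, hfx⟩

end Valley

def sextic (a s c x : ℝ) : ℝ := x ^ 6 - 4 * a * x ^ 4 - s * x ^ 3 + c

section Sextic

variable {a s c r : ℝ}

theorem continuous_sextic (a s c : ℝ) : Continuous (sextic a s c) := by
  unfold sextic
  fun_prop

theorem hasDerivAt_sextic (a s c x : ℝ) :
    HasDerivAt (sextic a s c) (x ^ 2 * (6 * x ^ 3 - 16 * a * x - 3 * s)) x :=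
  ((((hasDerivAt_pow 6 x).sub ((hasDerivAt_pow 4 x).const_mul (4 * a))).sub
      ((hasDerivAt_pow 3 x).const_mul s)).add_const c).congr_deriv (by push_cast; ring)

theorem tendsto_sextic_atTop (a s c : ℝ) : Tendsto (sextic a s c) atTop atTop := by
  let P : ℝ[X] := X ^ 6 - C (4 * a) * X ^ 4 - C s * X ^ 3 + C c
  have hdeg : P.degree = 6 := by unfold P; compute_degree!
  have hmonic : P.Monic := by unfold P; monicity!
  convert tendsto_atTop_of_leadingCoeff_nonneg P (by rw [hdeg]; norm_num)
    (by rw [hmonic.leadingCoeff]; norm_num) using 1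
  ext x
  simp [P, sextic]

theorem exists_pos_root_cubic (ha : 0 ≤ a) (hs : 0 < s) :
    ∃ r, 0 < r ∧ 6 * r ^ 3 - 16 * a * r - 3 * s = 0 := by
  set M := 3 * a + s + 1
  have hM : 0 < 6 * M ^ 3 - 16 * a * M - 3 * s := by
    have h1 : 1 ≤ M := by simp only [M]; linarith
    nlinarith [mul_le_mul h1 h1 zero_le_one (by linarith), mul_nonneg ha (by linarith : 0 ≤ M - 1)]
  obtain ⟨r, hr, hpr⟩ := intermediate_value_Ioo (by positivity : (0 : ℝ) ≤ M)
    (by fun_prop : Continuous fun x : ℝ => 6 * x ^ 3 - 16 * a * x - 3 * s).continuousOn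
    ⟨by linarith, hM⟩
  exact ⟨r, hr.1, hpr⟩

theorem mul_cubic_eq_of_root (hr : 6 * r ^ 3 - 16 * a * r - 3 * s = 0) (x : ℝ) :
    r * (6 * x ^ 3 - 16 * a * x - 3 * s) = (x - r) * (6 * x * r * (x + r) + 3 * s) := by
  linear_combination x * hr

theorem strictAntiOn_sextic (hs : 0 ≤ s) (hr0 : 0 < r)
    (hr : 6 * r ^ 3 - 16 * a * r - 3 * s = 0) : StrictAntiOn (sextic a s c) (Icc 0 r) := by
  refine strictAntiOn_of_deriv_neg (convex_Icc 0 r) (continuous_sextic a s c).continuousOn ?_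
  rw [interior_Icc]
  rintro x ⟨hx0, hxr⟩
  have hcubic : r * (6 * x ^ 3 - 16 * a * x - 3 * s) < 0 := by
    rw [mul_cubic_eq_of_root hr]
    exact mul_neg_of_neg_of_pos (by linarith) (by positivity)
  rw [(hasDerivAt_sextic a s c x).deriv]
  exact mul_neg_of_pos_of_neg (by positivity) (neg_of_mul_neg_right hcubic hr0.le)

theorem strictMonoOn_sextic (hs : 0 ≤ s) (hr0 : 0 < r)
    (hr : 6 * r ^ 3 - 16 * a * r - 3 * s = 0) : StrictMonoOn (sextic a s c) (Ici r) := by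
  refine strictMonoOn_of_deriv_pos (convex_Ici r) (continuous_sextic a s c).continuousOn ?_
  rw [interior_Ici]
  intro x (hrx : r < x)
  have hx0 : 0 < x := hr0.trans hrx
  have hcubic : 0 < r * (6 * x ^ 3 - 16 * a * x - 3 * s) := by
    rw [mul_cubic_eq_of_root hr]
    exact mul_pos (sub_pos.mpr hrx) (by positivity)
  rw [(hasDerivAt_sextic a s c x).deriv]
  exact mul_pos (by positivity) (pos_of_mul_pos_right hcubic hr0.le)

theorem sextic_neg_of_cubic_root (ha : 0 < a) (hs : 0 < s) (hc : c ≤ s ^ 2 / 4) (hr0 : 0 < r)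
    (hr : 6 * r ^ 3 - 16 * a * r - 3 * s = 0) : sextic a s c r < 0 := by
  have hcrit : 36 * sextic a s c r
      = -128 * a ^ 2 * r ^ 2 - 72 * a * s * r + 36 * (c - s ^ 2 / 4) := by
    unfold sextic
    linear_combination (6 * r ^ 3 - 8 * a * r - 3 * s) * hr
  nlinarith [sq_nonneg (a * r), mul_pos (mul_pos ha hs) hr0]

end Sextic

/-- Let `α > 0` and `(L̃₁, L̃₂) ≠ (0,0)`, `L̃² = L̃₁² + L̃₂²`, and
`F(x) = x⁶ − 4α²x⁴ − L̃²x³ + (L̃₁² − L̃₂²)²/4`. Then `F` has exactly two positive real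
roots if `L̃₁² ≠ L̃₂²`, and exactly one positive real root if `L̃₁² = L̃₂²`. -/
theorem stmt_13 (α L₁ L₂ : ℝ) (hα : 0 < α) (hL : (L₁, L₂) ≠ (0, 0)) :
    let F : ℝ → ℝ := fun x => x ^ 6 - 4 * α ^ 2 * x ^ 4 - (L₁ ^ 2 + L₂ ^ 2) * x ^ 3
      + (L₁ ^ 2 - L₂ ^ 2) ^ 2 / 4
    (L₁ ^ 2 ≠ L₂ ^ 2 → {x : ℝ | 0 < x ∧ F x = 0}.ncard = 2) ∧
      (L₁ ^ 2 = L₂ ^ 2 → ∃! x : ℝ, 0 < x ∧ F x = 0) := by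
  intro F
  have hs : 0 < L₁ ^ 2 + L₂ ^ 2 := by
    have : L₁ ≠ 0 ∨ L₂ ≠ 0 := by
      contrapose! hL
      simp [hL]
    rcases this with h | h <;> positivity
  have hc : (L₁ ^ 2 - L₂ ^ 2) ^ 2 / 4 ≤ (L₁ ^ 2 + L₂ ^ 2) ^ 2 / 4 := by
    nlinarith [sq_nonneg (L₁ * L₂)]
  obtain ⟨r, hr0, hr⟩ := exists_pos_root_cubic (sq_nonneg α) hs
  have hcont : ContinuousOn F (Ici 0) := (continuous_sextic _ _ _).continuousOn
  have hanti : StrictAntiOn F (Icc 0 r) := strictAntiOn_sextic hs.le hr0 hr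
  have hmono : StrictMonoOn F (Ici r) := strictMonoOn_sextic hs.le hr0 hr
  have hneg : F r < 0 := sextic_neg_of_cubic_root (pow_pos hα 2) hs hc hr0 hr
  have htop : Tendsto F atTop atTop := tendsto_sextic_atTop _ _ _
  refine ⟨fun hne => ?_, fun heq => ?_⟩
  · refine ncard_setOf_pos_zero_eq_two hr0.le hcont hanti hmono hneg htop ?_
    have : L₁ ^ 2 - L₂ ^ 2 ≠ 0 := sub_ne_zero.mpr hne
    norm_num [F]
    positivity
  · refine existsUnique_pos_zero hr0.le hcont hanti hmono hneg htop ?_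
    simp [F, heq]
end
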